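/- Let d ≥ 2, let n be a real number with n ≥ d, and let v : ℝ^d → ℝ be a positive C³ function which satisfies Δv = P at every point, where P := (1/v)·((n/2)‖∇v‖² + c_n). Then at every point of ℝ^d one has div( v^(2-n)·∇P ) = n·v^(1-n)·( |∇²v|² - (Δv)²/n ), where |∇²v|² denotes the squared Frobenius norm of the Hessian of v and div denotes the Euclidean divergence. -/

import Mathlib

/-!
Multiplying `Δv = P` by `v` gives `P v = (n/2) |∇v|² + c_n`. Taking the Laplacian of both sides,
with the product rule on the left and Bochner's formula `Δ|∇v|² = 2 (|∇²v|² + ⟨∇v, ∇Δv⟩)` on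
the right, and using `Δv = P` once more, gives `v ΔP = n |∇²v|² + (n - 2) ⟨∇v, ∇P⟩ - P²`.
Since `∇(v^(2-n)) = (2 - n) v^(1-n) ∇v`, the divergence equals
`v^(1-n) (v ΔP + (2 - n) ⟨∇v, ∇P⟩) = v^(1-n) (n |∇²v|² - (Δv)²)`.
-/

open MeasureTheory Metric

/-- The Euclidean Laplacian: the trace of the Hessian. -/
noncomputable def lap {d : ℕ} (u : EuclideanSpace ℝ (Fin d) → ℝ)
    (x : EuclideanSpace ℝ (Fin d)) : ℝ :=
  ∑ i, iteratedFDeriv ℝ 2 u x ![EuclideanSpace.single i 1, EuclideanSpace.single i 1]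

/-- The Euclidean divergence of a vector field. -/
noncomputable def diverg {d : ℕ} (V : EuclideanSpace ℝ (Fin d) → EuclideanSpace ℝ (Fin d))
    (x : EuclideanSpace ℝ (Fin d)) : ℝ :=
  ∑ i, fderiv ℝ V x (EuclideanSpace.single i 1) i

/-- The squared Frobenius norm of the Hessian: the sum of the squares of all
second partial derivatives. -/
noncomputable def hessNormSq {d : ℕ} (v : EuclideanSpace ℝ (Fin d) → ℝ)
    (x : EuclideanSpace ℝ (Fin d)) : ℝ :=
  ∑ i, ∑ j,
    (iteratedFDeriv ℝ 2 v x ![EuclideanSpace.single i 1, EuclideanSpace.single j 1]) ^ 2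

/-- The constant `c_n`: `2/(n-2)` for `n > 2` and `1/2` for `n = 2`. -/
noncomputable def cExp (n : ℝ) : ℝ := if 2 < n then 2 / (n - 2) else 1 / 2

noncomputable def dirDeriv {E : Type*} [NormedAddCommGroup E] [NormedSpace ℝ E]
    (u : E → ℝ) (w : E) (x : E) : ℝ :=
  fderiv ℝ u x w

section DirDeriv

variable {E : Type*} [NormedAddCommGroup E] [NormedSpace ℝ E] {f g u : E → ℝ} {v w x : E}

theorem dirDeriv_add (hf : DifferentiableAt ℝ f x) (hg : DifferentiableAt ℝ g x) :
    dirDeriv (fun y => f y + g y) w x = dirDeriv f w x + dirDeriv g w x := by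
  simp [dirDeriv, fderiv_fun_add hf hg]

theorem dirDeriv_mul (hf : DifferentiableAt ℝ f x) (hg : DifferentiableAt ℝ g x) :
    dirDeriv (fun y => f y * g y) w x = dirDeriv f w x * g x + f x * dirDeriv g w x := by
  simp only [dirDeriv, fderiv_fun_mul hf hg, add_apply, smul_apply,
    smul_eq_mul]
  ring

theorem dirDeriv_const_mul (a : ℝ) (hf : DifferentiableAt ℝ f x) :
    dirDeriv (fun y => a * f y) w x = a * dirDeriv f w x := by
  simp [dirDeriv, fderiv_const_mul hf]

theorem dirDeriv_add_const (c : ℝ) : dirDeriv (fun y => f y + c) w = dirDeriv f w := by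
  ext x
  simp [dirDeriv]

theorem dirDeriv_sum {ι : Type*} (s : Finset ι) {f : ι → E → ℝ}
    (hf : ∀ i ∈ s, DifferentiableAt ℝ (f i) x) :
    dirDeriv (fun y => ∑ i ∈ s, f i y) w x = ∑ i ∈ s, dirDeriv (f i) w x := by
  simp [dirDeriv, fderiv_fun_sum hf]

theorem ContDiff.dirDeriv {m n : WithTop ℕ∞} (hu : ContDiff ℝ n u) (hmn : m + 1 ≤ n) (w : E) :
    ContDiff ℝ m (dirDeriv u w) :=
  (hu.fderiv_right hmn).clm_apply contDiff_const

theorem ContDiff.differentiable_dirDeriv (hu : ContDiff ℝ 2 u) (w : E) :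
    Differentiable ℝ (_root_.dirDeriv u w) :=
  (hu.dirDeriv (m := 1) le_rfl w).differentiable one_ne_zero

theorem ContDiff.differentiable_fderiv (hu : ContDiff ℝ 2 u) : Differentiable ℝ (fderiv ℝ u) :=
  (hu.fderiv_right (m := 1) le_rfl).differentiable one_ne_zero

theorem fderiv_dirDeriv_apply (hu : DifferentiableAt ℝ (fderiv ℝ u) x) :
    fderiv ℝ (dirDeriv u v) x w = fderiv ℝ (fderiv ℝ u) x w v := by
  change fderiv ℝ (fun y => fderiv ℝ u y v) x w = _
  simp [fderiv_clm_apply hu (differentiableAt_const v)]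

theorem iteratedFDeriv_two_eq_dirDeriv_dirDeriv (hu : DifferentiableAt ℝ (fderiv ℝ u) x) :
    iteratedFDeriv ℝ 2 u x ![v, w] = dirDeriv (dirDeriv u w) v x := by
  simp [iteratedFDeriv_two_apply, dirDeriv, fderiv_dirDeriv_apply hu]

theorem dirDeriv_comm (hu : ContDiff ℝ 2 u) (v w : E) :
    dirDeriv (dirDeriv u v) w = dirDeriv (dirDeriv u w) v := by
  ext x
  simp only [dirDeriv, fderiv_dirDeriv_apply (hu.differentiable_fderiv x)]
  exact (hu.contDiffAt.isSymmSndFDerivAt (by simp)) w v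

end DirDeriv

section Euclidean

open EuclideanSpace

variable {d : ℕ} {f g u : EuclideanSpace ℝ (Fin d) → ℝ} {x : EuclideanSpace ℝ (Fin d)}

theorem gradient_apply_eq_dirDeriv (u : EuclideanSpace ℝ (Fin d) → ℝ)
    (x : EuclideanSpace ℝ (Fin d)) (i : Fin d) : gradient u x i = dirDeriv u (single i 1) x := by
  rw [dirDeriv, ← inner_gradient_left, inner_single_right]
  simp

theorem inner_gradient_eq_sum_dirDeriv :
    inner ℝ (gradient f x) (gradient g x)
      = ∑ i, dirDeriv f (single i 1) x * dirDeriv g (single i 1) x := by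
  rw [PiLp.inner_apply]
  simp only [gradient_apply_eq_dirDeriv, RCLike.inner_apply, conj_trivial, mul_comm]

theorem norm_gradient_sq_eq_sum_dirDeriv :
    ‖gradient u x‖ ^ 2 = ∑ i, dirDeriv u (single i 1) x ^ 2 := by
  rw [← real_inner_self_eq_norm_sq, inner_gradient_eq_sum_dirDeriv]
  simp only [sq]

theorem ContDiff.gradient {m n : WithTop ℕ∞} (hu : ContDiff ℝ n u) (hmn : m + 1 ≤ n) :
    ContDiff ℝ m (gradient u) := by
  refine contDiff_piLp 2 |>.2 fun i => ?_
  simpa [gradient_apply_eq_dirDeriv] using hu.dirDeriv hmn (single i 1)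

theorem gradient_rpow_const (p : ℝ) (hf : DifferentiableAt ℝ f x) (hx : f x ≠ 0) :
    gradient (fun y => f y ^ p) x = (p * f x ^ (p - 1)) • gradient f x := by
  ext i
  simp only [gradient_apply_eq_dirDeriv, PiLp.smul_apply, smul_eq_mul, dirDeriv,
    ((hf.hasFDerivAt.rpow_const (p := p) (Or.inl hx))).fderiv]
  simp

theorem lap_eq_sum_dirDeriv (hu : DifferentiableAt ℝ (fderiv ℝ u) x) :
    lap u x = ∑ i, dirDeriv (dirDeriv u (single i 1)) (single i 1) x := by
  simp only [lap, iteratedFDeriv_two_eq_dirDeriv_dirDeriv hu]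

theorem hessNormSq_eq_sum_norm_gradient_sq (hu : DifferentiableAt ℝ (fderiv ℝ u) x) :
    hessNormSq u x = ∑ j, ‖gradient (dirDeriv u (single j 1)) x‖ ^ 2 := by
  simp only [hessNormSq, iteratedFDeriv_two_eq_dirDeriv_dirDeriv hu,
    norm_gradient_sq_eq_sum_dirDeriv]
  exact Finset.sum_comm

theorem diverg_eq_sum_dirDeriv {V : EuclideanSpace ℝ (Fin d) → EuclideanSpace ℝ (Fin d)}
    (hV : DifferentiableAt ℝ V x) :
    diverg V x = ∑ i, dirDeriv (fun y => V y i) (single i 1) x := by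
  refine Finset.sum_congr rfl fun i _ => ?_
  have hVi : HasFDerivAt (fun y => V y i) (PiLp.proj 2 _ i ∘L fderiv ℝ V x) x :=
    (PiLp.hasFDerivAt_apply (𝕜 := ℝ) 2 (V x) i).comp x hV.hasFDerivAt
  rw [dirDeriv, hVi.fderiv]
  rfl

theorem lap_const_mul_add_const (a c : ℝ) (hf : ContDiff ℝ 2 f) :
    lap (fun y => a * f y + c) x = a * lap f x := by
  have hdf : ∀ w, dirDeriv (fun y => a * f y + c) w = fun y => a * dirDeriv f w y := fun w => by
    rw [dirDeriv_add_const]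
    exact funext fun y => dirDeriv_const_mul a (hf.differentiable two_ne_zero y)
  rw [lap_eq_sum_dirDeriv (((contDiff_const.mul hf).add contDiff_const).differentiable_fderiv x),
    lap_eq_sum_dirDeriv (hf.differentiable_fderiv x), Finset.mul_sum]
  refine Finset.sum_congr rfl fun i _ => ?_
  rw [hdf, dirDeriv_const_mul a (hf.differentiable_dirDeriv _ x)]

theorem lap_sum {ι : Type*} (s : Finset ι) {f : ι → EuclideanSpace ℝ (Fin d) → ℝ}
    (hf : ∀ j ∈ s, ContDiff ℝ 2 (f j)) :
    lap (fun y => ∑ j ∈ s, f j y) x = ∑ j ∈ s, lap (f j) x := by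
  have hdf : ∀ w, dirDeriv (fun y => ∑ j ∈ s, f j y) w = fun y => ∑ j ∈ s, dirDeriv (f j) w y :=
    fun w => funext fun y => dirDeriv_sum s fun j hj => (hf j hj).differentiable two_ne_zero y
  rw [lap_eq_sum_dirDeriv ((ContDiff.sum hf).differentiable_fderiv x)]
  simp only [hdf]
  rw [Finset.sum_congr rfl fun i _ =>
    dirDeriv_sum s fun j hj => (hf j hj).differentiable_dirDeriv _ x, Finset.sum_comm]
  exact Finset.sum_congr rfl fun j hj =>
    (lap_eq_sum_dirDeriv ((hf j hj).differentiable_fderiv x)).symm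

theorem lap_mul (hf : ContDiff ℝ 2 f) (hg : ContDiff ℝ 2 g) :
    lap (fun y => f y * g y) x
      = lap f x * g x + 2 * inner ℝ (gradient f x) (gradient g x) + f x * lap g x := by
  have hf1 := hf.differentiable two_ne_zero
  have hg1 := hg.differentiable two_ne_zero
  have hfw := hf.differentiable_dirDeriv
  have hgw := hg.differentiable_dirDeriv
  have hdf : ∀ w, dirDeriv (fun y => f y * g y) w
      = fun y => dirDeriv f w y * g y + f y * dirDeriv g w y :=
    fun w => funext fun y => dirDeriv_mul (hf1 y) (hg1 y)
  rw [lap_eq_sum_dirDeriv ((hf.mul hg).differentiable_fderiv x),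
    lap_eq_sum_dirDeriv (hf.differentiable_fderiv x),
    lap_eq_sum_dirDeriv (hg.differentiable_fderiv x), inner_gradient_eq_sum_dirDeriv,
    Finset.sum_mul, Finset.mul_sum, Finset.mul_sum, ← Finset.sum_add_distrib,
    ← Finset.sum_add_distrib]
  refine Finset.sum_congr rfl fun i _ => ?_
  rw [hdf, dirDeriv_add ((hfw _ x).fun_mul (hg1 x)) ((hf1 x).fun_mul (hgw _ x)),
    dirDeriv_mul (hfw _ x) (hg1 x), dirDeriv_mul (hf1 x) (hgw _ x)]
  ring

theorem lap_dirDeriv (hu : ContDiff ℝ 3 u) (w : EuclideanSpace ℝ (Fin d)) :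
    lap (dirDeriv u w) x = dirDeriv (lap u) w x := by
  have hu2 : ContDiff ℝ 2 u := hu.of_le (by norm_num)
  have hui : ∀ i : Fin d, ContDiff ℝ 2 (dirDeriv u (single i 1)) :=
    fun i => hu.dirDeriv (by norm_num) _
  have hlap : lap u = fun y => ∑ i, dirDeriv (dirDeriv u (single i 1)) (single i 1) y :=
    funext fun y => lap_eq_sum_dirDeriv (hu2.differentiable_fderiv y)
  rw [lap_eq_sum_dirDeriv ((hu.dirDeriv (by norm_num) w).differentiable_fderiv x), hlap,
    dirDeriv_sum _ fun i _ => (hui i).differentiable_dirDeriv _ x]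
  refine Finset.sum_congr rfl fun i _ => ?_
  rw [dirDeriv_comm hu2 w, dirDeriv_comm (hui i) w]

theorem lap_norm_gradient_sq (hu : ContDiff ℝ 3 u) :
    lap (fun y => ‖gradient u y‖ ^ 2) x
      = 2 * (hessNormSq u x + inner ℝ (gradient u x) (gradient (lap u) x)) := by
  have hu2 : ContDiff ℝ 2 u := hu.of_le (by norm_num)
  have hui : ∀ j : Fin d, ContDiff ℝ 2 (dirDeriv u (single j 1)) :=
    fun j => hu.dirDeriv (by norm_num) _
  have hsq : (fun y => ‖gradient u y‖ ^ 2)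
      = fun y => ∑ j, dirDeriv u (single j 1) y * dirDeriv u (single j 1) y :=
    funext fun y => by rw [norm_gradient_sq_eq_sum_dirDeriv]; simp only [sq]
  rw [hsq, lap_sum _ fun j _ => (hui j).mul (hui j),
    hessNormSq_eq_sum_norm_gradient_sq (hu2.differentiable_fderiv x),
    inner_gradient_eq_sum_dirDeriv]
  simp only [lap_mul (hui _) (hui _), lap_dirDeriv hu, real_inner_self_eq_norm_sq]
  rw [mul_add, Finset.mul_sum, Finset.mul_sum, ← Finset.sum_add_distrib]
  exact Finset.sum_congr rfl fun j _ => by ring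

theorem diverg_smul_gradient (hf : DifferentiableAt ℝ f x) (hu : ContDiff ℝ 2 u) :
    diverg (fun y => f y • gradient u y) x
      = f x * lap u x + inner ℝ (gradient f x) (gradient u x) := by
  have hV : DifferentiableAt ℝ (fun y => f y • gradient u y) x :=
    hf.smul ((hu.gradient (m := 1) le_rfl).differentiable one_ne_zero x)
  rw [diverg_eq_sum_dirDeriv hV, lap_eq_sum_dirDeriv (hu.differentiable_fderiv x),
    inner_gradient_eq_sum_dirDeriv, Finset.mul_sum, ← Finset.sum_add_distrib]
  refine Finset.sum_congr rfl fun i _ => ?_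
  simp only [PiLp.smul_apply, smul_eq_mul, gradient_apply_eq_dirDeriv]
  rw [dirDeriv_mul hf (hu.differentiable_dirDeriv _ x)]
  ring

theorem diverg_rpow_smul_gradient (p : ℝ) (hf : DifferentiableAt ℝ f x) (hx : f x ≠ 0)
    (hu : ContDiff ℝ 2 u) :
    diverg (fun y => f y ^ p • gradient u y) x
      = f x ^ p * lap u x + p * f x ^ (p - 1) * inner ℝ (gradient f x) (gradient u x) := by
  rw [diverg_smul_gradient (hf.rpow_const (Or.inl hx)) hu, gradient_rpow_const p hf hx,
    real_inner_smul_left]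

end Euclidean

/-- Lemma 2.2, Euclidean case: if `Δv = P` then `div(v^(2-n) ∇P) = n v^(1-n) (|∇²v|² - (Δv)²/n)`. -/
theorem stmt_7 (d : ℕ) (hd : 2 ≤ d) (n : ℝ) (hn : (d : ℝ) ≤ n)
    (v : EuclideanSpace ℝ (Fin d) → ℝ) (hv : ContDiff ℝ 3 v) (hvpos : ∀ x, 0 < v x)
    (P : EuclideanSpace ℝ (Fin d) → ℝ)
    (hP : ∀ x, P x = (1 / v x) * ((n / 2) * ‖gradient v x‖ ^ 2 + cExp n))
    (heq : ∀ x, lap v x = P x) :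
    ∀ x,
      diverg (fun y => (v y) ^ ((2 : ℝ) - n) • gradient P y) x
      = n * (v x) ^ ((1 : ℝ) - n) * (hessNormSq v x - (lap v x) ^ 2 / n) := by
  intro x
  have hv2 : ContDiff ℝ 2 v := hv.of_le (by norm_num)
  have hgrad : ContDiff ℝ 2 fun y => ‖gradient v y‖ ^ 2 :=
    (contDiff_norm_sq ℝ).comp (hv.gradient le_rfl)
  have hP2 : ContDiff ℝ 2 P := by
    rw [funext hP]
    exact (contDiff_const.div hv2 fun y => (hvpos y).ne').mul
      ((contDiff_const.mul hgrad).add contDiff_const)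
  have hPv : (fun y => P y * v y) = fun y => n / 2 * ‖gradient v y‖ ^ 2 + cExp n :=
    funext fun y => by rw [hP y]; field_simp [(hvpos y).ne']
  have hlapPv : lap P x * v x + 2 * inner ℝ (gradient P x) (gradient v x) + P x * lap v x
      = n * (hessNormSq v x + inner ℝ (gradient v x) (gradient P x)) := by
    rw [← lap_mul hP2 hv2, hPv, lap_const_mul_add_const _ _ hgrad,
      lap_norm_gradient_sq hv, funext heq]
    ring
  have hn0 : n ≠ 0 := (by linarith [show (2 : ℝ) ≤ d by exact_mod_cast hd] : 0 < n).ne'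
  have hpow : v x ^ ((2 : ℝ) - n) = v x * v x ^ ((1 : ℝ) - n) := by
    rw [show (2 : ℝ) - n = 1 + (1 - n) by ring, Real.rpow_add (hvpos x), Real.rpow_one]
  rw [heq x, real_inner_comm] at hlapPv
  rw [diverg_rpow_smul_gradient _ (hv2.differentiable two_ne_zero x) (hvpos x).ne' hP2, heq x,
    hpow, show (2 : ℝ) - n - 1 = 1 - n by ring]
  field_simp
  linear_combination (v x ^ ((1 : ℝ) - n)) * hlapPv
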